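/- For symmetric positive definite matrices Σ₁ and Σ₂, define the matrix geometric mean A # B = A^{1/2}(A^{-1/2} B A^{-1/2})^{1/2} A^{1/2} and let X := Σ₁⁻¹ # Σ₂ − I. Then (I + X)Σ₁(I + X) = Σ₂; i.e., the Bures–Wasserstein logarithm log_{Σ₁}(Σ₂) = Σ₁⁻¹ # Σ₂ − I inverts the exponential map exp_{Σ₁}(X) = (I+X)Σ₁(I+X). -/

import Mathlib

open Matrix

lemma posDef_conj_aux {d : ℕ} {A B : Matrix (Fin d) (Fin d) ℝ}
    (hA : A.PosDef) (hB : B.PosDef) : (B * A * B).PosDef := by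
  have hBH : Bᴴ = B := hB.isHermitian
  refine Matrix.PosDef.of_dotProduct_mulVec_pos ?_ ?_
  · have := isHermitian_conjTranspose_mul_mul B hA.isHermitian
    rwa [hBH] at this
  · intro x hx
    have hinj : Function.Injective (B.mulVec) :=
      Matrix.mulVec_injective_iff_isUnit.mpr hB.isUnit
    have hxB : B *ᵥ x ≠ 0 := fun h => hx (hinj (h.trans (Matrix.mulVec_zero B).symm))
    have := hA.dotProduct_mulVec_pos hxB
    simpa only [star_mulVec, dotProduct_mulVec, vecMul_vecMul, hBH] using this

/-- The Bures–Wasserstein logarithm `X = Σ₁⁻¹ # Σ₂ − I` inverts the exponential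
map: `(I+X) Σ₁ (I+X) = Σ₂`, where `#` is the matrix geometric mean built from
any assignment of symmetric positive definite square roots. -/
theorem bures_wasserstein_log_inverts_exp {d : ℕ}
    (S₁ S₂ : Matrix (Fin d) (Fin d) ℝ) (hS₁ : S₁.PosDef) (hS₂ : S₂.PosDef)
    (sqrt : Matrix (Fin d) (Fin d) ℝ → Matrix (Fin d) (Fin d) ℝ)
    (hsqrt : ∀ A : Matrix (Fin d) (Fin d) ℝ, A.PosDef →
      (sqrt A).PosDef ∧ sqrt A * sqrt A = A)
    (X : Matrix (Fin d) (Fin d) ℝ)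
    (hX : X = sqrt S₁⁻¹ * sqrt ((sqrt S₁⁻¹)⁻¹ * S₂ * (sqrt S₁⁻¹)⁻¹) * sqrt S₁⁻¹ - 1) :
    (1 + X) * S₁ * (1 + X) = S₂ := by
  set R := sqrt S₁⁻¹ with hRdef
  obtain ⟨hR, hRR⟩ := hsqrt S₁⁻¹ hS₁.inv
  have hM : ((R)⁻¹ * S₂ * (R)⁻¹).PosDef := posDef_conj_aux hS₂ hR.inv
  set T := sqrt (R⁻¹ * S₂ * R⁻¹) with hTdef
  obtain ⟨hT, hTT⟩ := hsqrt _ hM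
  have h1X : 1 + X = R * T * R := by rw [hX]; abel
  have hRu := hR.isUnit
  have := hRu.invertible
  have hS₁eq : S₁ = R⁻¹ * R⁻¹ := by
    have : S₁⁻¹⁻¹ = (R * R)⁻¹ := by rw [hRR]
    rwa [Matrix.nonsing_inv_nonsing_inv _ (isUnit_iff_isUnit_det _ |>.1 hS₁.isUnit),
      Matrix.mul_inv_rev] at this
  have c1 : R * R⁻¹ = 1 := Matrix.mul_inv_of_invertible R
  have c2 : R⁻¹ * R = 1 := Matrix.inv_mul_of_invertible R
  rw [h1X, hS₁eq]
  calc R * T * R * (R⁻¹ * R⁻¹) * (R * T * R)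
      = R * T * ((R * R⁻¹) * (R⁻¹ * R)) * T * R := by simp only [Matrix.mul_assoc]
    _ = R * (T * T) * R := by simp only [c1, c2, Matrix.mul_one, Matrix.one_mul,
        Matrix.mul_assoc]
    _ = (R * R⁻¹) * S₂ * (R⁻¹ * R) := by rw [hTT]; simp only [Matrix.mul_assoc]
    _ = S₂ := by rw [c1, c2, Matrix.one_mul, Matrix.mul_one]
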